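/- arXiv:2605.09833 — 2 statements merged into one kernel-verified Lean document; each statement's English description precedes it below -/
import Mathlib

section
/- For q_X, q_Y ∈ (0, 1/2] with q_Y ≤ q_X, the maximum of H_b(q_Y) - (1-q_X)H_b((q_Y-θ)/(1-q_X)) - q_X H_b(θ/q_X) over θ in the Fréchet–Hoeffding interval equals H_b(q_Y) - q_X H_b(q_Y/q_X). -/
/-- Binary entropy function. -/
noncomputable def Hb (t : ℝ) : ℝ := -(t * Real.log t) - (1 - t) * Real.log (1 - t)

lemma Hb_eq (t : ℝ) : Hb t = Real.negMulLog t + Real.negMulLog (1 - t) := by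
  simp [Hb, Real.negMulLog]; ring

lemma Hb_zero : Hb 0 = 0 := by simp [Hb]

/-- Concavity of binary entropy on `[0,1]`. -/
lemma hbConcaveOn : ConcaveOn ℝ (Set.Icc (0:ℝ) 1) Hb := by
  have h1 : ConcaveOn ℝ (Set.Icc (0:ℝ) 1) Real.negMulLog :=
    Real.concaveOn_negMulLog.subset (fun x hx => hx.1) (convex_Icc 0 1)
  have h2 : ConcaveOn ℝ (Set.Icc (0:ℝ) 1) (fun t => Real.negMulLog (1 - t)) := by
    refine ⟨convex_Icc 0 1, ?_⟩
    intro x hx y hy a b ha hb hab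
    have hx' : (1:ℝ) - x ∈ Set.Ici (0:ℝ) := by simp; linarith [hx.2]
    have hy' : (1:ℝ) - y ∈ Set.Ici (0:ℝ) := by simp; linarith [hy.2]
    have := Real.concaveOn_negMulLog.2 hx' hy' ha hb hab
    simp only [smul_eq_mul] at this ⊢
    have e : a * (1 - x) + b * (1 - y) = 1 - (a * x + b * y) := by linear_combination hab
    rw [e] at this
    exact this
  have := h1.add h2
  rw [show Hb = _ from funext Hb_eq]
  exact this

lemma p_mul_Hb (p q : ℝ) (hp : 0 < p) :
    p * Hb (q / p) = Real.negMulLog q + Real.negMulLog (p - q) - Real.negMulLog p := by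
  have key : ∀ x : ℝ, p * Real.negMulLog (x / p) = Real.negMulLog x + x * Real.log p := by
    intro x
    rcases eq_or_ne x 0 with rfl | hx
    · simp
    · unfold Real.negMulLog
      rw [Real.log_div hx hp.ne']
      field_simp
      ring
  have h1 : 1 - q / p = (p - q) / p := by field_simp
  rw [Hb_eq, h1, mul_add, key, key]
  unfold Real.negMulLog
  ring

/-- `p ↦ p · Hb(q/p)` is monotone. -/
lemma mono_pHb (q a b : ℝ) (hq : 0 < q) (hqa : q ≤ a) (hab : a ≤ b) :
    a * Hb (q / a) ≤ b * Hb (q / b) := by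
  have ha : 0 < a := lt_of_lt_of_le hq hqa
  have hb : 0 < b := lt_of_lt_of_le ha hab
  rw [p_mul_Hb a q ha, p_mul_Hb b q hb]
  -- need: negMulLog (a - q) + negMulLog b ≤ negMulLog (b - q) + negMulLog a
  have hd : 0 < b - a + q := by linarith
  set t : ℝ := (b - a) / (b - a + q) with ht
  have ht0 : 0 ≤ t := div_nonneg (by linarith) hd.le
  have ht1 : t ≤ 1 := by
    rw [ht, div_le_one hd]; linarith
  have hmemaq : a - q ∈ Set.Ici (0:ℝ) := by simp; linarith
  have hmemb : b ∈ Set.Ici (0:ℝ) := hb.le.trans_eq rfl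
  have e1 : t * (a - q) + (1 - t) * b = a := by
    rw [ht]; field_simp; ring
  have e2 : (1 - t) * (a - q) + t * b = b - q := by
    rw [ht]; field_simp; ring
  have c1 := Real.concaveOn_negMulLog.2 hmemaq hmemb ht0 (by linarith : (0:ℝ) ≤ 1 - t)
    (by ring)
  have c2 := Real.concaveOn_negMulLog.2 hmemaq hmemb (by linarith : (0:ℝ) ≤ 1 - t) ht0
    (by ring)
  simp only [smul_eq_mul] at c1 c2
  rw [e1] at c1
  rw [e2] at c2
  linarith

theorem stmt_12 (qX qY : ℝ) (hX : qX ∈ Set.Ioc (0:ℝ) (1/2)) (hY : qY ∈ Set.Ioc (0:ℝ) (1/2))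
    (hle : qY ≤ qX) :
    IsGreatest
      ((fun θ : ℝ => Hb qY - (1 - qX) * Hb ((qY - θ) / (1 - qX)) - qX * Hb (θ / qX)) ''
        Set.Icc (max 0 (qX + qY - 1)) (min qX qY))
      (Hb qY - qX * Hb (qY / qX)) := by
  obtain ⟨hX0, hX2⟩ := hX
  obtain ⟨hY0, hY2⟩ := hY
  have hXc : 0 < 1 - qX := by linarith
  have hmax : max 0 (qX + qY - 1) = 0 := max_eq_left (by linarith)
  have hmin : min qX qY = qY := min_eq_right hle
  rw [hmax, hmin]
  constructor
  · refine ⟨qY, ⟨hY0.le, le_refl _⟩, ?_⟩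
    simp [Hb_zero]
  · rintro v ⟨θ, ⟨hθ0, hθ1⟩, rfl⟩
    simp only
    -- suffices: qX * Hb (qY/qX) ≤ (1-qX) * Hb ((qY-θ)/(1-qX)) + qX * Hb (θ/qX)
    have hmono : qX * Hb (qY / qX) ≤ (1 - qX) * Hb (qY / (1 - qX)) :=
      mono_pHb qY qX (1 - qX) hY0 hle (by linarith)
    set t : ℝ := θ / qY with ht
    have ht0 : 0 ≤ t := div_nonneg hθ0 hY0.le
    have ht1 : t ≤ 1 := by rw [ht, div_le_one hY0]; exact hθ1
    have hθeq : θ = t * qY := by rw [ht]; field_simp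
    have hx1 : qY / (1 - qX) ∈ Set.Icc (0:ℝ) 1 := by
      constructor
      · positivity
      · rw [div_le_one hXc]; linarith
    have hx2 : qY / qX ∈ Set.Icc (0:ℝ) 1 := by
      constructor
      · positivity
      · rw [div_le_one hX0]; exact hle
    have h0mem : (0:ℝ) ∈ Set.Icc (0:ℝ) 1 := ⟨le_refl _, by norm_num⟩
    have c1 := hbConcaveOn.2 hx1 h0mem (by linarith : (0:ℝ) ≤ 1 - t) ht0 (by ring)
    have c2 := hbConcaveOn.2 h0mem hx2 (by linarith : (0:ℝ) ≤ 1 - t) ht0 (by ring)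
    simp only [smul_eq_mul, smul_zero, mul_zero, Hb_zero, add_zero, zero_add] at c1 c2
    have e1 : (1 - t) * (qY / (1 - qX)) = (qY - θ) / (1 - qX) := by
      rw [hθeq]; field_simp
    have e2 : t * (qY / qX) = θ / qX := by
      rw [hθeq]; field_simp
    rw [e1] at c1
    rw [e2] at c2
    -- combine
    have k1 : (1 - t) * ((1 - qX) * Hb (qY / (1 - qX))) ≥ (1 - t) * (qX * Hb (qY / qX)) :=
      mul_le_mul_of_nonneg_left hmono (by linarith)
    have k2 : (1 - qX) * Hb ((qY - θ) / (1 - qX)) ≥ (1 - qX) * ((1 - t) * Hb (qY / (1 - qX))) :=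
      mul_le_mul_of_nonneg_left c1 hXc.le
    have k3 : qX * Hb (θ / qX) ≥ qX * (t * Hb (qY / qX)) :=
      mul_le_mul_of_nonneg_left c2 hX0.le
    nlinarith [k1, k2, k3]
end

section
/- Let q_X, q_Y ∈ (0, 1/2] and R ≥ 0, and set α = min{R/H_b(q_X), q_Y/q_X} if q_Y ≤ q_X and α = min{R/H_b(q_X), (1-q_Y)/(1-q_X)} if q_Y ≥ q_X. Then the value V(R) = H_b(q_Y) - (1-q_X) H_b(q_Y - q_X α) - q_X H_b(q_Y + (1-q_X) α) is nondecreasing in R. -/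
lemma Hb_eq_s18 : Hb = Real.binEntropy := by
  funext t
  simp [Hb, Real.binEntropy, Real.log_inv]
  ring

lemma F_anti (qX qY M : ℝ) (hX0 : 0 < qX) (hX1 : qX < 1)
    (hA : 0 ≤ qY - qX * M) (hB : qY + (1 - qX) * M ≤ 1) :
    AntitoneOn (fun a => (1 - qX) * Hb (qY - qX * a) + qX * Hb (qY + (1 - qX) * a))
      (Set.Icc 0 M) := by
  rw [Hb_eq_s18]
  have key : ∀ x ∈ interior (Set.Icc (0:ℝ) M),
      HasDerivAt (fun y : ℝ => (1 - qX) * Real.binEntropy (qY - qX * y)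
        + qX * Real.binEntropy (qY + (1 - qX) * y))
      ((1 - qX) * ((Real.log (1 - (qY - qX * x)) - Real.log (qY - qX * x)) * (-qX))
        + qX * ((Real.log (1 - (qY + (1 - qX) * x)) - Real.log (qY + (1 - qX) * x)) * (1 - qX)))
      x := by
    intro x hx
    rw [interior_Icc] at hx
    obtain ⟨hx0, hxM⟩ := hx
    set a := qY - qX * x with ha
    set b := qY + (1 - qX) * x with hb
    have ha0 : 0 < a := by rw [ha]; nlinarith
    have hb1 : b < 1 := by rw [hb]; nlinarith
    have hab : a < b := by rw [ha, hb]; nlinarith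
    have ha1 : a < 1 := lt_trans hab hb1
    have hb0 : 0 < b := lt_trans ha0 hab
    have hia : HasDerivAt (fun y : ℝ => qY - qX * y) (-qX) x := by
      simpa using ((hasDerivAt_id x).const_mul qX).const_sub qY
    have hib : HasDerivAt (fun y : ℝ => qY + (1 - qX) * y) (1 - qX) x := by
      simpa using ((hasDerivAt_id x).const_mul (1 - qX)).const_add qY
    have hda := ((Real.hasDerivAt_binEntropy ha0.ne' ha1.ne).comp x hia).const_mul (1 - qX)
    have hdb := ((Real.hasDerivAt_binEntropy hb0.ne' hb1.ne).comp x hib).const_mul qX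
    exact hda.add hdb
  apply antitoneOn_of_deriv_nonpos (convex_Icc 0 M)
  · exact Continuous.continuousOn (by fun_prop)
  · intro x hx
    exact (key x hx).differentiableAt.differentiableWithinAt
  · intro x hx
    rw [(key x hx).deriv]
    rw [interior_Icc] at hx
    obtain ⟨hx0, hxM⟩ := hx
    have ha0 : 0 < qY - qX * x := by nlinarith
    have hab : qY - qX * x < qY + (1 - qX) * x := by nlinarith
    have hb1 : qY + (1 - qX) * x < 1 := by nlinarith
    have h1 : Real.log (1 - (qY + (1 - qX) * x)) ≤ Real.log (1 - (qY - qX * x)) :=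
      Real.log_le_log (by linarith) (by linarith)
    have h2 : Real.log (qY - qX * x) ≤ Real.log (qY + (1 - qX) * x) :=
      Real.log_le_log ha0 hab.le
    nlinarith [mul_pos hX0 (sub_pos.mpr hX1)]

theorem stmt_18 (qX qY : ℝ) (hX : qX ∈ Set.Ioc (0:ℝ) (1/2)) (hY : qY ∈ Set.Ioc (0:ℝ) (1/2))
    (α : ℝ → ℝ)
    (hα : ∀ R, α R = if qY ≤ qX then min (R / Hb qX) (qY / qX)
                     else min (R / Hb qX) ((1 - qY) / (1 - qX)))
    (V : ℝ → ℝ)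
    (hV : ∀ R, V R = Hb qY - (1 - qX) * Hb (qY - qX * α R) - qX * Hb (qY + (1 - qX) * α R)) :
    ∀ R₁ R₂ : ℝ, 0 ≤ R₁ → R₁ ≤ R₂ → V R₁ ≤ V R₂ := by
  intro R₁ R₂ hR1 hR12
  obtain ⟨hX0, hX2⟩ := hX
  obtain ⟨hY0, hY2⟩ := hY
  have hX1 : qX < 1 := by linarith
  have hH : 0 < Hb qX := by
    rw [Hb_eq_s18]; exact Real.binEntropy_pos hX0 hX1
  set M : ℝ := if qY ≤ qX then qY / qX else (1 - qY) / (1 - qX) with hM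
  have hA : 0 ≤ qY - qX * M := by
    rw [hM]; split
    · rw [mul_div_cancel₀ _ hX0.ne']; linarith
    · rename_i h
      push_neg at h
      have h1 : qX * ((1 - qY) / (1 - qX)) ≤ qY := by
        rw [mul_div_assoc', div_le_iff₀ (by linarith : (0:ℝ) < 1 - qX)]
        nlinarith
      linarith
  have hB : qY + (1 - qX) * M ≤ 1 := by
    rw [hM]; split
    · rename_i h
      have h1 : (1 - qX) * (qY / qX) ≤ 1 - qY := by
        rw [mul_div_assoc', div_le_iff₀ hX0]
        nlinarith
      linarith
    · have h1 : (1 - qX) * ((1 - qY) / (1 - qX)) = 1 - qY := by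
        rw [mul_comm, div_mul_eq_mul_div, mul_div_assoc,
          div_self (show (1:ℝ) - qX ≠ 0 by linarith), mul_one]
      linarith
  have hM0 : 0 ≤ M := by
    rw [hM]; split
    · exact div_nonneg hY0.le hX0.le
    · exact div_nonneg (by linarith) (by linarith)
  have hmem : ∀ R : ℝ, 0 ≤ R → α R ∈ Set.Icc 0 M := by
    intro R hR
    by_cases h : qY ≤ qX
    · rw [hα R, if_pos h, hM, if_pos h]
      exact ⟨le_min (div_nonneg hR hH.le) (div_nonneg hY0.le hX0.le), min_le_right _ _⟩
    · rw [hα R, if_neg h, hM, if_neg h]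
      exact ⟨le_min (div_nonneg hR hH.le) (div_nonneg (by linarith) (by linarith)),
        min_le_right _ _⟩
  have hmono : α R₁ ≤ α R₂ := by
    rw [hα R₁, hα R₂]
    have hd : R₁ / Hb qX ≤ R₂ / Hb qX := (div_le_div_iff_of_pos_right hH).mpr hR12
    split_ifs <;> exact min_le_min hd le_rfl
  have hanti := F_anti qX qY M hX0 hX1 hA hB (hmem R₁ hR1) (hmem R₂ (le_trans hR1 hR12)) hmono
  rw [hV R₁, hV R₂]
  simp only at hanti
  linarith
end
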